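/- arXiv:1902.06957 — 6 statements merged into one kernel-verified Lean document; each statement's English description precedes it below -/
import Mathlib

section
/- Let A be a matrix over GF(2) with finite row index set V and finite column index set E, let M be the binary matroid on ground set E represented by A, let T ⊆ E, and let k be a non-negative integer. Then a set F ⊆ E∖T satisfies |F| ≤ k and T ⊆ span(F) in the dual matroid M* (i.e., every element of T lies in the closure of F in M*) if and only if |F| ≤ k and for every W ∈ T there exists a subset F_W ⊆ F such that the characteristic vector of F_W ∪ {W} lies in the span over GF(2) of the set of rows of A. -/
open Matrix

variable {V E : Type*}

/-- The columns of `A` indexed by the set `S` are linearly independent over GF(2);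
this is the independence predicate of the binary matroid `M` represented by `A`. -/
def ColIndep (A : Matrix V E (ZMod 2)) (S : Set E) : Prop :=
  LinearIndependent (ZMod 2) (fun e : S => (Aᵀ e.1 : V → ZMod 2))

/-- A base of the binary matroid represented by `A`: a maximal independent set of columns. -/
def IsBase (A : Matrix V E (ZMod 2)) (B : Set E) : Prop :=
  ColIndep A B ∧ ∀ S : Set E, ColIndep A S → B ⊆ S → S = B

/-- A set is independent in the dual matroid `M*` iff it is disjoint from some base of `M`. -/
def DualIndep (A : Matrix V E (ZMod 2)) (S : Set E) : Prop :=
  ∃ B : Set E, IsBase A B ∧ Disjoint S B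

/-- The rank of a set `S` in the dual matroid `M*`: the maximum size of an
`M*`-independent subset of `S`. -/
noncomputable def DualRank (A : Matrix V E (ZMod 2)) (S : Set E) : ℕ :=
  sSup (Set.ncard '' {I : Set E | I ⊆ S ∧ DualIndep A I})

/-- The closure (span) of a set `F` in the dual matroid `M*`: the set of elements whose
addition to `F` does not increase its rank in `M*`. -/
noncomputable def DualClosure (A : Matrix V E (ZMod 2)) (F : Set E) : Set E :=
  {e : E | DualRank A (insert e F) = DualRank A F}

/-- The characteristic vector of a set `F ⊆ E`, as a vector in GF(2)^E. -/
noncomputable def charVec (F : Set E) : E → ZMod 2 := F.indicator 1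

/-!
Let `r` be the rank function of `M`, the GF(2)-rank of a set of columns. Complementing a base of
`M` gives `r*(S) = |S| + r(E ∖ S) - r(E)`, so for `W ∉ F` the element `W` lies in the `M*`-closure
of `F` exactly when column `W` is not in the span of the columns outside `F ∪ {W}`. By duality in
GF(2)^V this happens iff some vector of the row space is nonzero at `W` and vanishes outside
`F ∪ {W}`; over GF(2) such a vector is the characteristic vector of its support, a set of the
form `F_W ∪ {W}`.
-/

section Rank
variable {K M ι : Type*} [Field K] [AddCommGroup M] [Module K M] {v : ι → M}

theorem LinearIndepOn.ncard_eq_finrank_image {I : Set ι} (hI : LinearIndepOn K v I)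
    (hfin : I.Finite) : I.ncard = (v '' I).finrank K := by
  have := hfin.fintype
  rw [Set.finrank, Set.image_eq_range, finrank_span_eq_card hI, Set.ncard_eq_toFinset_card',
    Set.toFinset_card]

theorem finrank_image_le_ncard {X : Set ι} (hfin : X.Finite) :
    (v '' X).finrank K ≤ X.ncard := by
  have := (hfin.image v).fintype
  calc (v '' X).finrank K ≤ (v '' X).toFinset.card := finrank_span_le_card _
    _ = (v '' X).ncard := (Set.ncard_eq_toFinset_card' _).symm
    _ ≤ X.ncard := Set.ncard_image_le hfin

theorem finrank_image_union_le [FiniteDimensional K M] (X Y : Set ι) :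
    (v '' (X ∪ Y)).finrank K ≤ (v '' X).finrank K + (v '' Y).finrank K := by
  rw [Set.finrank, Set.image_union, Submodule.span_union]
  exact Submodule.finrank_add_le_finrank_add_finrank _ _

theorem finrank_image_insert_of_mem_span {X : Set ι} {a : ι}
    (h : v a ∈ Submodule.span K (v '' X)) :
    (v '' insert a X).finrank K = (v '' X).finrank K := by
  rw [Set.finrank, Set.image_insert_eq, Submodule.span_insert_eq_span h]
  rfl

theorem finrank_image_insert_of_notMem_span [FiniteDimensional K M] {X : Set ι} {a : ι}
    (h : v a ∉ Submodule.span K (v '' X)) :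
    (v '' insert a X).finrank K = (v '' X).finrank K + 1 := by
  rw [Set.finrank, Set.image_insert_eq, Submodule.span_insert, sup_comm,
    Submodule.finrank_sup_span_singleton h]
  rfl

end Rank

noncomputable abbrev colRank (A : Matrix V E (ZMod 2)) (X : Set E) : ℕ :=
  (Aᵀ '' X).finrank (ZMod 2)

section BinaryMatroid
variable [Fintype V] [Finite E] (A : Matrix V E (ZMod 2)) {I B X : Set E}

theorem ColIndep.ncard_le_colRank (hI : ColIndep A I) (hIX : I ⊆ X) :
    I.ncard ≤ colRank A X :=
  (LinearIndepOn.ncard_eq_finrank_image hI I.toFinite).trans_le <|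
    Set.finrank_mono (Set.image_mono hIX)

theorem ColIndep.exists_superset_ncard_eq (hI : ColIndep A I) (hIX : I ⊆ X) :
    ∃ J, I ⊆ J ∧ J ⊆ X ∧ ColIndep A J ∧ J.ncard = colRank A X := by
  obtain ⟨J, hJX, hIJ, hspan, hJ⟩ := exists_linearIndepOn_extension hI hIX
  refine ⟨J, hIJ, hJX, hJ, le_antisymm (ColIndep.ncard_le_colRank A hJ hJX) ?_⟩
  rw [hJ.ncard_eq_finrank_image J.toFinite]
  exact Submodule.finrank_mono (Submodule.span_le.2 hspan)

theorem isBase_iff_ncard_eq_colRank : IsBase A B ↔ ColIndep A B ∧ B.ncard = colRank A Set.univ := by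
  refine ⟨fun ⟨hB, hmax⟩ => ⟨hB, ?_⟩, fun ⟨hB, hcard⟩ => ⟨hB, fun S hS hBS => ?_⟩⟩
  · obtain ⟨J, hBJ, -, hJ, hJcard⟩ := hB.exists_superset_ncard_eq A (Set.subset_univ B)
    rwa [← hmax J hJ hBJ]
  · exact (Set.eq_of_subset_of_ncard_le hBS
      (hcard ▸ hS.ncard_le_colRank A (Set.subset_univ S))).symm

theorem ColIndep.exists_isBase_superset (hI : ColIndep A I) : ∃ B, I ⊆ B ∧ IsBase A B := by
  obtain ⟨B, hIB, -, hB, hcard⟩ := hI.exists_superset_ncard_eq A (Set.subset_univ I)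
  exact ⟨B, hIB, (isBase_iff_ncard_eq_colRank A).2 ⟨hB, hcard⟩⟩

end BinaryMatroid

section DualMatroid
variable [Fintype V] [Finite E] (A : Matrix V E (ZMod 2))

theorem DualIndep.ncard_add_colRank_univ_le {I S : Set E} (hI : DualIndep A I) (hIS : I ⊆ S) :
    I.ncard + colRank A Set.univ ≤ S.ncard + colRank A Sᶜ := by
  obtain ⟨B, hB, hIB⟩ := hI
  have hcompl : Iᶜ ⊆ Sᶜ ∪ S \ I := fun e he =>
    (em (e ∈ S)).elim (fun heS => Or.inr ⟨heS, he⟩) Or.inl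
  calc I.ncard + colRank A Set.univ
      = I.ncard + B.ncard := by rw [((isBase_iff_ncard_eq_colRank A).1 hB).2]
    _ ≤ I.ncard + colRank A Iᶜ :=
      Nat.add_le_add_left (hB.1.ncard_le_colRank A (Set.subset_compl_iff_disjoint_left.2 hIB)) _
    _ ≤ I.ncard + (colRank A Sᶜ + (S \ I).ncard) := by
      gcongr
      calc colRank A Iᶜ ≤ colRank A (Sᶜ ∪ S \ I) := Set.finrank_mono (Set.image_mono hcompl)
        _ ≤ colRank A Sᶜ + colRank A (S \ I) := finrank_image_union_le _ _
        _ ≤ colRank A Sᶜ + (S \ I).ncard := by gcongr; exact finrank_image_le_ncard (S \ I).toFinite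
    _ = S.ncard + colRank A Sᶜ := by
      rw [← Set.ncard_sdiff_add_ncard_of_subset hIS]
      ring

theorem exists_dualIndep_ncard_add_colRank_univ_eq (S : Set E) :
    ∃ I ⊆ S, DualIndep A I ∧ I.ncard + colRank A Set.univ = S.ncard + colRank A Sᶜ := by
  obtain ⟨J, -, hJS, hJ, hJcard⟩ :=
    ColIndep.exists_superset_ncard_eq A (linearIndepOn_empty _ _) (Set.empty_subset Sᶜ)
  obtain ⟨B, hJB, hB⟩ := hJ.exists_isBase_superset A
  have hBS : (B \ S).ncard = colRank A Sᶜ :=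
    le_antisymm
      (ColIndep.ncard_le_colRank A (LinearIndepOn.mono hB.1 Set.sdiff_subset) fun _ he => he.2)
      (hJcard ▸ Set.ncard_le_ncard fun e he => ⟨hJB he, hJS he⟩)
  refine ⟨S \ B, Set.sdiff_subset, ⟨B, hB, Set.disjoint_sdiff_left⟩, ?_⟩
  have h₁ := Set.ncard_inter_add_ncard_sdiff_eq_ncard B S
  have h₂ := Set.ncard_inter_add_ncard_sdiff_eq_ncard S B
  rw [Set.inter_comm] at h₂
  rw [← ((isBase_iff_ncard_eq_colRank A).1 hB).2]
  omega

theorem dualRank_add_colRank_univ (S : Set E) :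
    DualRank A S + colRank A Set.univ = S.ncard + colRank A Sᶜ := by
  obtain ⟨I, hIS, hI, hcard⟩ := exists_dualIndep_ncard_add_colRank_univ_eq A S
  suffices DualRank A S = I.ncard by omega
  refine IsGreatest.csSup_eq ⟨⟨I, ⟨hIS, hI⟩, rfl⟩, ?_⟩
  rintro _ ⟨J, ⟨hJS, hJ⟩, rfl⟩
  have := hJ.ncard_add_colRank_univ_le A hJS
  omega

theorem mem_dualClosure_iff {F : Set E} {W : E} (hW : W ∉ F) :
    W ∈ DualClosure A F ↔ Aᵀ W ∉ Submodule.span (ZMod 2) (Aᵀ '' (insert W F)ᶜ) := by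
  have h₁ := dualRank_add_colRank_univ A (insert W F)
  have h₂ := dualRank_add_colRank_univ A F
  rw [Set.ncard_insert_of_notMem hW] at h₁
  rw [show Fᶜ = insert W (insert W F)ᶜ by
    ext e; by_cases h : e = W <;> simp [h, hW]] at h₂
  simp only [colRank] at h₁ h₂
  change DualRank A (insert W F) = DualRank A F ↔ _
  by_cases h : Aᵀ W ∈ Submodule.span (ZMod 2) (Aᵀ '' (insert W F)ᶜ)
  · rw [finrank_image_insert_of_mem_span h] at h₂
    simp only [h, not_true_eq_false, iff_false]
    omega
  · rw [finrank_image_insert_of_notMem_span h] at h₂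
    simp only [h, not_false_eq_true, iff_true]
    omega

end DualMatroid

theorem Matrix.transpose_notMem_span_image_iff {K : Type*} [Field K] [Fintype V]
    (A : Matrix V E K) (X : Set E) (e : E) :
    Aᵀ e ∉ Submodule.span K (Aᵀ '' X) ↔
      ∃ x ∈ Submodule.span K (Set.range A), x e ≠ 0 ∧ ∀ e' ∈ X, x e' = 0 := by
  classical
  have hrow : Submodule.span K (Set.range A) = LinearMap.range A.vecMulLinear :=
    (range_vecMulLinear A).symm
  simp only [hrow, LinearMap.mem_range, exists_exists_eq_and, vecMulLinear_apply]
  constructor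
  · intro h
    obtain ⟨f, hfe, hle⟩ := Submodule.exists_le_ker_of_notMem h
    have hf : ∀ y, f y = (dotProductEquiv K V).symm f ⬝ᵥ y := fun y =>
      (LinearMap.congr_fun ((dotProductEquiv K V).apply_symm_apply f) y).symm
    refine ⟨(dotProductEquiv K V).symm f, (hf _).symm.trans_ne hfe, fun e' he' => ?_⟩
    exact (hf _).symm.trans (hle (Submodule.subset_span ⟨e', he', rfl⟩))
  · rintro ⟨c, hce, hcX⟩ hmem
    have hle : Submodule.span K (Aᵀ '' X) ≤ LinearMap.ker (dotProductEquiv K V c) := by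
      rw [Submodule.span_le]
      rintro _ ⟨e', he', rfl⟩
      exact hcX e' he'
    exact hce (hle hmem)

theorem charVec_support (x : E → ZMod 2) : charVec (Function.support x) = x := by
  funext e
  by_cases he : x e = 0
  · simp [charVec, he]
  · simpa [charVec, he] using ((by decide : ∀ a : ZMod 2, a ≠ 0 → a = 1) _ he).symm

theorem exists_charVec_insert_mem_iff (R : Set (E → ZMod 2)) (W : E) (F : Set E) :
    (∃ FW ⊆ F, charVec (insert W FW) ∈ R) ↔
      ∃ x ∈ R, x W ≠ 0 ∧ ∀ e ∉ insert W F, x e = 0 := by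
  constructor
  · rintro ⟨FW, hFW, hR⟩
    refine ⟨_, hR, by simp [charVec], fun e he => ?_⟩
    exact Set.indicator_of_notMem (fun h => he (Set.insert_subset_insert hFW h)) _
  · rintro ⟨x, hR, hW, hF⟩
    refine ⟨Function.support x \ {W}, fun e ⟨hx, heW⟩ => ?_, ?_⟩
    · by_contra heF
      exact hx (hF e fun h => h.elim heW heF)
    · rwa [Set.insert_sdiff_singleton, Set.insert_eq_of_mem hW, charVec_support]

/-- Let `M` be the binary matroid represented by `A`, `T ⊆ E`, `k ∈ ℕ`,
and let `F ⊆ E ∖ T`. Then `|F| ≤ k` and `T ⊆ span(F)` in the dual matroid `M*` if and only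
if `|F| ≤ k` and for every `W ∈ T` there is `F_W ⊆ F` such that the characteristic vector
of `F_W ∪ {W}` lies in the GF(2)-span of the rows of `A`. -/
theorem dual_span_iff_charVec_mem_rowSpan
    [Fintype V] [Fintype E] (A : Matrix V E (ZMod 2)) (T : Set E) (k : ℕ)
    (F : Set E) (hFT : Disjoint F T) :
    (F.ncard ≤ k ∧ T ⊆ DualClosure A F) ↔
      (F.ncard ≤ k ∧ ∀ W ∈ T, ∃ FW ⊆ F,
        charVec (insert W FW) ∈ Submodule.span (ZMod 2) (Set.range fun v : V => A v)) := by
  have key : ∀ W ∈ T, W ∈ DualClosure A F ↔ ∃ FW ⊆ F,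
      charVec (insert W FW) ∈ Submodule.span (ZMod 2) (Set.range fun v : V => A v) :=
    fun W hW => (mem_dualClosure_iff A (hFT.notMem_of_mem_right hW)).trans <|
      (transpose_notMem_span_image_iff A _ W).trans (exists_charVec_insert_mem_iff _ W F).symm
  exact and_congr_right fun _ => forall₂_congr key
end

section
/- Consider an instance of Space Cover on a perturbed graphic matroid: a loopless finite multigraph G, a matrix P over GF(2) with rows indexed by V(G) and columns indexed by E(G), the matrix A = I(G) + P, a terminal set T ⊆ E(G), and a non-negative integer k; let t be the number of distinct columns of P. If there exists a set F ⊆ E(G)∖T with |F| ≤ k such that for every e ∈ T the column A^e lies in the GF(2)-span of {A^f : f ∈ F}, then there exists such a set F with the additional property that the number of cycles of G whose edge set is contained in F is at most 2^t. -/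
/-!
Choose a solution `F` that is inclusion-minimal. Its columns `A^f` are then linearly
independent, since a column in the span of the others could be dropped. For a cycle `C`,
every vertex meets an even number of edges of `C`, so the incidence columns over `C` sum to
zero and the columns of `A` over `C` sum to the same vector as the columns of `P`. Two cycles
in `F` with the same `P`-sum would give a nontrivial linear dependence among the columns of
`A` over `F`. So the map taking a cycle to its `P`-sum is injective on the cycles in `F`.
Its values lie in the span of the `t` distinct columns of `P`, and that span has at most
`2 ^ t` elements.
-/

open Matrix

variable {V E : Type*}

/-- The incidence matrix over GF(2) of the loopless multigraph with vertex set `V`,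
edge set `E` and endpoint maps `x y : E → V`: the entry at `(v, e)` is `1` exactly
when `v` is an endpoint of `e`. -/
def incMatrix [DecidableEq V] (x y : E → V) : Matrix V E (ZMod 2) :=
  fun v e => if v = x e ∨ v = y e then 1 else 0

/-- `v` is incident to the edge `e`. -/
def Incid (x y : E → V) (v : V) (e : E) : Prop := v = x e ∨ v = y e

/-- A cycle of a loopless multigraph: a nonempty set `C` of edges such that every vertex
incident to an edge of `C` is incident to exactly two edges of `C`, and the subgraph formed
by `C` together with its incident vertices is connected. -/
def IsCycle (x y : E → V) (C : Set E) : Prop :=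
  C.Nonempty ∧
  (∀ v : V, (∃ e ∈ C, Incid x y v e) → {e ∈ C | Incid x y v e}.ncard = 2) ∧
  (∀ u v : V, (∃ e ∈ C, Incid x y u e) → (∃ e ∈ C, Incid x y v e) →
    Relation.ReflTransGen
      (fun a b => ∃ e ∈ C, (a = x e ∧ b = y e) ∨ (a = y e ∧ b = x e)) u v)

open Submodule

theorem linearIndepOn_of_minimal_subset_span {K M ι : Type*} [DivisionRing K] [AddCommGroup M]
    [Module K M] {v : ι → M} {S : Set M} {F : Set ι}
    (hF : Minimal (fun F' => S ⊆ span K (v '' F')) F) : LinearIndepOn K v F := by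
  rw [linearIndepOn_iff_notMem_span]
  intro e he hespan
  have hspan_eq : span K (v '' (F \ {e})) = span K (v '' F) := by
    rw [← span_insert_eq_span hespan, ← Set.image_insert_eq, Set.insert_sdiff_singleton,
      Set.insert_eq_of_mem he]
  exact (hF.2 (hF.1.trans hspan_eq.ge) Set.sdiff_subset he).2 rfl

theorem Matrix.mulVec_injOn_of_linearIndepOn {K m n : Type*} [CommRing K] [Fintype n]
    {M : Matrix m n K} {F : Set n} (hM : LinearIndepOn K Mᵀ F) :
    Set.InjOn M.mulVec {c | Function.support c ⊆ F} := by
  classical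
  intro c hc c' hc' h
  have hzero : ∀ i ∉ F, (c - c') i = 0 := fun i hi => by
    simp [Function.notMem_support.mp fun h => hi (hc h),
      Function.notMem_support.mp fun h => hi (hc' h)]
  have hsum : ∑ i with i ∈ F, (c - c') i • Mᵀ i = 0 := by
    rw [Finset.sum_filter_of_ne fun i _ hi => by_contra fun hiF => hi (by simp [hzero i hiF])]
    have hker : M *ᵥ (c - c') = 0 := by rw [mulVec_sub, h, sub_self]
    simpa only [mulVec_eq_sum, op_smul_eq_smul, Pi.sub_apply] using hker
  funext i
  by_cases hi : i ∈ F
  · exact sub_eq_zero.mp <|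
      linearIndepOn_iff''.mp hM _ _ (by simp) (by simpa using hzero) hsum i (by simpa)
  · exact sub_eq_zero.mp (hzero i hi)

theorem Matrix.mulVec_mem_span_image_col {R m n : Type*} [CommSemiring R] [Fintype n]
    [DecidableEq (m → R)] (M : Matrix m n R) (c : n → R) :
    M *ᵥ c ∈ span R (Finset.univ.image fun j => Mᵀ j : Finset (m → R)) := by
  rw [Finset.coe_image, Finset.coe_univ, Set.image_univ, ← col_def, ← range_mulVecLin]
  exact ⟨c, rfl⟩

theorem ncard_span_finset_le {K M : Type*} [Field K] [Finite K] [AddCommGroup M] [Module K M]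
    (s : Finset M) : (span K (s : Set M) : Set M).ncard ≤ Nat.card K ^ s.card := by
  rw [← Nat.card_coe_set_eq, SetLike.coe_sort_coe, Module.natCard_eq_pow_finrank (K := K)]
  exact Nat.pow_le_pow_right Nat.card_pos (finrank_span_finset_le_card s)

theorem incMatrix_mulVec_indicator_eq_zero [Fintype E] [DecidableEq V]
    {x y : E → V} {C : Set E} (hC : IsCycle x y C) : incMatrix x y *ᵥ C.indicator 1 = 0 := by
  classical
  funext v
  have hcount : (incMatrix x y *ᵥ C.indicator 1) v = ({e ∈ C | Incid x y v e}.ncard : ZMod 2) := by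
    rw [Set.ncard_eq_toFinset_card', Set.toFinset_ofPred, ← Finset.sum_boole]
    refine Finset.sum_congr rfl fun e _ => ?_
    by_cases he : e ∈ C <;> simp [incMatrix, Incid, he]
  rw [hcount, Pi.zero_apply]
  by_cases hv : ∃ e ∈ C, Incid x y v e
  · rw [hC.2.1 v hv]; rfl
  · simp [Set.sep_eq_empty_iff_mem_false.mpr fun e he hi => hv ⟨e, he, hi⟩]

theorem spaceCoverPGM_exists_solution_with_few_cycles_general
    [Fintype V] [Fintype E] [DecidableEq V]
    (x y : E → V)
    (P : Matrix V E (ZMod 2)) (T : Set E) (k : ℕ)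
    (A : Matrix V E (ZMod 2)) (hA : A = incMatrix x y + P)
    (t : ℕ) (ht : t = (Finset.univ.image (fun e : E => Pᵀ e)).card)
    (hex : ∃ F : Set E, Disjoint F T ∧ F.ncard ≤ k ∧
      ∀ e ∈ T, Aᵀ e ∈ Submodule.span (ZMod 2) ((fun f : E => Aᵀ f) '' F)) :
    ∃ F : Set E, Disjoint F T ∧ F.ncard ≤ k ∧
      (∀ e ∈ T, Aᵀ e ∈ Submodule.span (ZMod 2) ((fun f : E => Aᵀ f) '' F)) ∧
      {C : Set E | IsCycle x y C ∧ C ⊆ F}.ncard ≤ 2 ^ t := by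
  obtain ⟨F, hFmin⟩ := exists_minimal_of_wellFoundedLT _ hex
  obtain ⟨hFT, hFk, hFspan⟩ := hFmin.prop
  refine ⟨F, hFT, hFk, hFspan, ?_⟩
  have hind : LinearIndepOn (ZMod 2) Aᵀ F := by
    refine linearIndepOn_of_minimal_subset_span (S := Aᵀ '' T)
      ⟨Set.image_subset_iff.mpr hFspan, fun F' hF' hle => hFmin.2 ?_ hle⟩
    exact ⟨hFT.mono_left hle, (Set.ncard_le_ncard hle).trans hFk, fun e he => hF' ⟨e, he, rfl⟩⟩
  have hinj : Set.InjOn (fun C : Set E => P *ᵥ C.indicator 1) {C | IsCycle x y C ∧ C ⊆ F} := by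
    rintro C₁ ⟨hC₁, hC₁F⟩ C₂ ⟨hC₂, hC₂F⟩ h
    refine Set.indicator_one_inj (ZMod 2) (mulVec_injOn_of_linearIndepOn hind
      (Set.support_indicator_subset.trans hC₁F) (Set.support_indicator_subset.trans hC₂F) ?_)
    simpa [hA, add_mulVec, incMatrix_mulVec_indicator_eq_zero, hC₁, hC₂] using h
  calc {C : Set E | IsCycle x y C ∧ C ⊆ F}.ncard
      ≤ (span (ZMod 2) ((Finset.univ.image fun e : E => Pᵀ e : Finset (V → ZMod 2)) :
          Set (V → ZMod 2)) : Set (V → ZMod 2)).ncard :=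
        Set.ncard_le_ncard_of_injOn _ (fun C _ => P.mulVec_mem_span_image_col _) hinj
    _ ≤ Nat.card (ZMod 2) ^ t := ht ▸ ncard_span_finset_le _
    _ = 2 ^ t := by rw [Nat.card_zmod]

/-- Space Cover on a perturbed graphic matroid: given a loopless finite
multigraph `G`, a perturbation matrix `P` over GF(2), the matrix `A = I(G) + P`,
terminals `T ⊆ E(G)` and `k ∈ ℕ`, with `t` the number of distinct columns of `P`:
if some `F ⊆ E(G) ∖ T` with `|F| ≤ k` spans all terminal columns of `A`, then there is
such an `F` for which the number of cycles of `G` whose edge set is contained in `F`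
is at most `2 ^ t`. -/
theorem spaceCoverPGM_exists_solution_with_few_cycles
    [Fintype V] [Fintype E] [DecidableEq V]
    (x y : E → V) (hloop : ∀ e : E, x e ≠ y e)
    (P : Matrix V E (ZMod 2)) (T : Set E) (k : ℕ)
    (A : Matrix V E (ZMod 2)) (hA : A = incMatrix x y + P)
    (t : ℕ) (ht : t = (Finset.univ.image (fun e : E => Pᵀ e)).card)
    (hex : ∃ F : Set E, Disjoint F T ∧ F.ncard ≤ k ∧
      ∀ e ∈ T, Aᵀ e ∈ Submodule.span (ZMod 2) ((fun f : E => Aᵀ f) '' F)) :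
    ∃ F : Set E, Disjoint F T ∧ F.ncard ≤ k ∧
      (∀ e ∈ T, Aᵀ e ∈ Submodule.span (ZMod 2) ((fun f : E => Aᵀ f) '' F)) ∧
      {C : Set E | IsCycle x y C ∧ C ⊆ F}.ncard ≤ 2 ^ t :=
  spaceCoverPGM_exists_solution_with_few_cycles_general x y P T k A hA t ht hex
end

section
/- Consider an instance of Space Cover on the dual of a perturbed graphic matroid: a loopless finite multigraph G, a matrix P over GF(2) with rows indexed by V(G) and columns indexed by E(G), A = I(G) + P, a terminal set T ⊆ E(G), and a non-negative integer k. If there exist a parity restriction h and a set S ⊆ E(G)∖T that is a solution compatible with h, then there exists F ⊆ E(G)∖T with |F| ≤ k such that for every e ∈ T there is a subset F_e ⊆ F for which the characteristic vector of F_e ∪ {e} (a vector in GF(2)^{E(G)}) lies in the GF(2)-span of the set of rows of A. -/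
open Matrix

variable {V E : Type*}

/-- The set of distinct rows `R_1, …, R_t` of the matrix `P`. -/
def RowsOf (P : Matrix V E (ZMod 2)) : Set (E → ZMod 2) := Set.range fun v : V => P v

/-- For an assignment `B` of a bit to each distinct row of `P` (a vector in `GF(2)^t`),
`sumVec P B = ∑_{i=1}^t b_i • R_i ∈ GF(2)^{E}`. -/
noncomputable def sumVec (P : Matrix V E (ZMod 2)) (B : (E → ZMod 2) → ZMod 2) :
    E → ZMod 2 :=
  ∑ᶠ r ∈ RowsOf P, B r • r

/-- `X ⊆ V(G)` is compatible with `B` if `|X ∩ V_i| ≡ b_i (mod 2)` for every distinct row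
`R_i` of `P`, where `V_i = {v : P_v = R_i}`. -/
def CompatibleWith (P : Matrix V E (ZMod 2)) (X : Set V)
    (B : (E → ZMod 2) → ZMod 2) : Prop :=
  ∀ r ∈ RowsOf P, (({v ∈ X | P v = r}.ncard : ZMod 2)) = B r

/-- The edge `e` is expensive with respect to `(B, (X, X̄))`: writing `r̃` for the entry of
`sumVec P B` at `e`, either both endpoints lie in `X` and `r̃ = 1`, or both lie in `X̄` and
`r̃ = 1`, or exactly one endpoint lies in `X` and `r̃ = 0`. -/
def Expensive (x y : E → V) (P : Matrix V E (ZMod 2))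
    (B : (E → ZMod 2) → ZMod 2) (X : Set V) (e : E) : Prop :=
  (x e ∈ X ∧ y e ∈ X ∧ sumVec P B e = 1) ∨
  (x e ∉ X ∧ y e ∉ X ∧ sumVec P B e = 1) ∨
  (((x e ∈ X ∧ y e ∉ X) ∨ (x e ∉ X ∧ y e ∈ X)) ∧ sumVec P B e = 0)

/-- The partition `(X, X̄)` is good with respect to `(B, e)`: `X` is compatible with `B`,
`e` is expensive, and every edge of `T ∖ {e}` is cheap. -/
def GoodPartition (x y : E → V) (P : Matrix V E (ZMod 2)) (T : Set E)
    (B : (E → ZMod 2) → ZMod 2) (e : E) (X : Set V) : Prop :=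
  CompatibleWith P X B ∧ Expensive x y P B X e ∧
    ∀ e' ∈ T, e' ≠ e → ¬ Expensive x y P B X e'

/-- `S ⊆ E(G) ∖ T` is a solution compatible with the parity restriction `h`: `|S| ≤ k` and
for every terminal `e ∈ T` there is a partition `(X_e, X̄_e)` of `V(G)` that is good with
respect to `(h e, e)` such that every edge expensive with respect to `(h e, (X_e, X̄_e))`
other than `e` belongs to `S`. -/
def SolutionCompatible (x y : E → V) (P : Matrix V E (ZMod 2)) (T : Set E) (k : ℕ)
    (h : E → (E → ZMod 2) → ZMod 2) (S : Set E) : Prop :=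
  S.ncard ≤ k ∧ ∀ e ∈ T, ∃ X : Set V,
    GoodPartition x y P T (h e) e X ∧
    ∀ e' : E, Expensive x y P (h e) X e' → e' ≠ e → e' ∈ S

/-!
Take `F := S`. For a terminal `e` with good partition `(X, X̄)`, compatibility of `X` with
`B = h e` says exactly that the rows of `P` indexed by `X` sum to `sum(B)`, while the rows of
the incidence matrix indexed by `X` sum to the indicator of the cut `δ(X)` (the graph is
loopless). Hence `∑_{v ∈ X} A_v` has a `1` precisely at the edges expensive with respect to
`(B, (X, X̄))`, which are `e` together with a subset of `S`.
-/

open Finset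

theorem finsum_mem_range_smul_eq_sum {ι R M : Type*} [Fintype ι] [Semiring R]
    [AddCommMonoid M] [Module R M] {f : ι → M} {B : M → R} {s : Finset ι}
    (hB : ∀ r ∈ Set.range f, ({i ∈ (s : Set ι) | f i = r}.ncard : R) = B r) :
    ∑ᶠ r ∈ Set.range f, B r • r = ∑ i ∈ s, f i := by
  classical
  have hrange : Set.range f = ↑(univ.image f) := by simp
  rw [hrange, finsum_mem_coe_finset,
    ← sum_fiberwise_of_maps_to (g := f) fun i _ => mem_image_of_mem f (mem_univ i)]
  refine sum_congr rfl fun r hr => ?_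
  have hfiber : {i ∈ (s : Set ι) | f i = r} = ↑{i ∈ s | f i = r} := by simp
  rw [← hB r (hrange ▸ hr), hfiber, Set.ncard_coe_finset, Nat.cast_smul_eq_nsmul, ← sum_const]
  exact sum_congr rfl fun i hi => (mem_filter.1 hi).2.symm

theorem sumVec_eq_sum_rows [Fintype V] {P : Matrix V E (ZMod 2)}
    {B : (E → ZMod 2) → ZMod 2} {s : Finset V} (hs : CompatibleWith P ↑s B) :
    sumVec P B = ∑ v ∈ s, P v :=
  finsum_mem_range_smul_eq_sum hs

theorem incMatrix_apply_of_ne [DecidableEq V] {x y : E → V} {e : E} (hxy : x e ≠ y e)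
    (v : V) :
    incMatrix x y v e = (if v = x e then 1 else 0) + (if v = y e then 1 else 0) := by
  unfold incMatrix
  by_cases hx : v = x e
  · simp [hx, hxy]
  · by_cases hy : v = y e <;> simp [hx, hy, hxy.symm]

theorem sum_incMatrix_apply_of_ne [DecidableEq V] {x y : E → V} {e : E} (hxy : x e ≠ y e)
    (s : Finset V) :
    ∑ v ∈ s, incMatrix x y v e = (if x e ∈ s then 1 else 0) + (if y e ∈ s then 1 else 0) := by
  simp only [incMatrix_apply_of_ne hxy, sum_add_distrib, sum_ite_eq']

theorem expensive_iff [DecidableEq V] {x y : E → V} {P : Matrix V E (ZMod 2)}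
    {B : (E → ZMod 2) → ZMod 2} {s : Finset V} {e : E} :
    Expensive x y P B ↑s e ↔
      (if x e ∈ s then 1 else 0) + (if y e ∈ s then 1 else 0) + sumVec P B e = 1 := by
  unfold Expensive
  generalize sumVec P B e = r
  revert r
  by_cases hx : x e ∈ s <;> by_cases hy : y e ∈ s <;> simp [hx, hy]
  all_goals decide

theorem charVec_setOf_expensive [Fintype V] [DecidableEq V] {x y : E → V}
    (hloop : ∀ e, x e ≠ y e) {P : Matrix V E (ZMod 2)} {B : (E → ZMod 2) → ZMod 2}
    {s : Finset V} (hs : CompatibleWith P ↑s B) :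
    charVec {e | Expensive x y P B ↑s e} = ∑ v ∈ s, (incMatrix x y + P) v := by
  have hbit : ∀ a : ZMod 2, (if a = 1 then 1 else 0) = a := by decide
  funext e
  rw [sum_apply e s fun v => (incMatrix x y + P) v]
  simp only [Matrix.add_apply, sum_add_distrib, sum_incMatrix_apply_of_ne (hloop e),
    ← sum_apply e s fun v => P v, ← sumVec_eq_sum_rows hs]
  simp only [charVec, Set.indicator_apply, Set.mem_ofPred_eq, expensive_iff, Pi.one_apply, hbit]

theorem solutionCompatible_implies_spaceCoverDualPGM_general
    [Fintype V] [DecidableEq V]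
    (x y : E → V) (hloop : ∀ e : E, x e ≠ y e)
    (P A : Matrix V E (ZMod 2)) (hA : A = incMatrix x y + P)
    (T : Set E) (k : ℕ)
    (hex : ∃ (h : E → (E → ZMod 2) → ZMod 2) (S : Set E),
      Disjoint S T ∧ SolutionCompatible x y P T k h S) :
    ∃ F : Set E, Disjoint F T ∧ F.ncard ≤ k ∧
      ∀ e ∈ T, ∃ Fe ⊆ F,
        charVec (insert e Fe) ∈
          Submodule.span (ZMod 2) (Set.range fun v : V => A v) := by
  obtain ⟨h, S, hST, hcard, hsol⟩ := hex
  refine ⟨S, hST, hcard, fun e he => ?_⟩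
  obtain ⟨X, ⟨hcomp, hexp, -⟩, hcover⟩ := hsol e he
  obtain ⟨s, rfl⟩ := X.toFinite.exists_finset_coe
  refine ⟨{e' | Expensive x y P (h e) ↑s e' ∧ e' ≠ e}, fun e' he' => hcover e' he'.1 he'.2, ?_⟩
  have hins : insert e {e' | Expensive x y P (h e) ↑s e' ∧ e' ≠ e} =
      {e' | Expensive x y P (h e) ↑s e'} := by
    ext e'
    by_cases he' : e' = e <;> simp [he', hexp]
  rw [hins, charVec_setOf_expensive hloop hcomp, ← hA]
  exact Submodule.sum_mem _ fun v _ => Submodule.subset_span ⟨v, rfl⟩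

/-- Space Cover on the dual of a perturbed graphic matroid: if there exist
a parity restriction `h` and a set `S ⊆ E(G) ∖ T` that is a solution compatible with `h`,
then there exists `F ⊆ E(G) ∖ T` with `|F| ≤ k` such that for every `e ∈ T` there is
`F_e ⊆ F` whose characteristic vector together with `e` lies in the GF(2)-span of the rows
of `A = I(G) + P`. -/
theorem solutionCompatible_implies_spaceCoverDualPGM
    [Fintype V] [Fintype E] [DecidableEq V]
    (x y : E → V) (hloop : ∀ e : E, x e ≠ y e)
    (P A : Matrix V E (ZMod 2)) (hA : A = incMatrix x y + P)
    (T : Set E) (k : ℕ)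
    (hex : ∃ (h : E → (E → ZMod 2) → ZMod 2) (S : Set E),
      Disjoint S T ∧ SolutionCompatible x y P T k h S) :
    ∃ F : Set E, Disjoint F T ∧ F.ncard ≤ k ∧
      ∀ e ∈ T, ∃ Fe ⊆ F,
        charVec (insert e Fe) ∈
          Submodule.span (ZMod 2) (Set.range fun v : V => A v) :=
  solutionCompatible_implies_spaceCoverDualPGM_general x y hloop P A hA T k hex
end

section
/- In the setting of an Edge-Set Cover instance with a fixed terminal e ∈ T and the auxiliary multigraph G' constructed from it, let (Y,Ȳ) be an e-preliminary partition of V(G). Define U_Y (respectively Ū_Y) to be the set of new vertices of G' (vertices in V(G')∖V(G)) both of whose neighbours in G' lie in Ȳ (respectively, both of whose neighbours lie in Y). Set A_Y = Y ∪ U_Y and B_Y = V(G')∖A_Y, and let S_Y be the set of edges of G' having both endpoints in A_Y or both endpoints in B_Y. Then |S_Y| ≤ k and the graph G'∖S_Y is bipartite. -/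
variable {V E : Type*}

/-- The edge `e'` contributes to `(e₀, (X, X̄))` with respect to `f = f_{e₀}`: both
endpoints of `e'` lie in `X` and `f(e') = 1`, or both lie in `X̄` and `f(e') = 1`, or
exactly one endpoint lies in `X` and `f(e') = 0`. -/
def Contrib (x y : E → V) (f : E → ZMod 2) (X : Set V) (e' : E) : Prop :=
  (x e' ∈ X ∧ y e' ∈ X ∧ f e' = 1) ∨
  (x e' ∉ X ∧ y e' ∉ X ∧ f e' = 1) ∨
  (((x e' ∈ X ∧ y e' ∉ X) ∨ (x e' ∉ X ∧ y e' ∈ X)) ∧ f e' = 0)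

/-- `(Y, Ȳ)` is an `e₀`-preliminary partition: it almost fits `e₀`
(`T ∩ cont(e₀, Y) = {e₀}`) and `|cont(e₀, Y) ∖ {e₀}| ≤ k`. -/
def Preliminary (x y : E → V) (f : E → ZMod 2) (T : Set E) (k : ℕ) (e₀ : E)
    (Y : Set V) : Prop :=
  Contrib x y f Y e₀ ∧ (∀ e' ∈ T, e' ≠ e₀ → ¬ Contrib x y f Y e') ∧
  {e' : E | Contrib x y f Y e' ∧ e' ≠ e₀}.ncard ≤ k

/-- The edge `e'` gets a new vertex in the auxiliary graph `G'`: either `e'` is a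
non-terminal edge with `f(e') = 0` (which is subdivided), or `e' = e₀` and `f(e₀) = 1`,
or `e'` is another terminal with `f(e') = 0`. -/
def NeedsNew (T : Set E) (f : E → ZMod 2) (e₀ : E) (e' : E) : Prop :=
  (e' ∉ T ∧ f e' = 0) ∨ (e' = e₀ ∧ f e₀ = 1) ∨ (e' ∈ T ∧ e' ≠ e₀ ∧ f e' = 0)

/-- Valid indices for the edges of the auxiliary graph `G'`. An edge of `G'` is indexed by
a triple `(e', i, b)` where `e' ∈ E(G)`, `i ∈ Fin (k+1)` and `b : Bool`:
* a non-terminal edge `e'` with `f(e') = 1` is kept: index `(e', 0, false)`;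
* a non-terminal edge `e'` with `f(e') = 0` is subdivided into the two edges
  `(e', 0, false)` (at `x e'`) and `(e', 0, true)` (at `y e'`);
* if `f(e₀) = 0`, `k+1` parallel edges `(e₀, i, false)` join the endpoints of `e₀`;
* if `f(e₀) = 1`, a new vertex is joined to `x e₀` by the `k+1` edges `(e₀, i, false)`
  and to `y e₀` by the `k+1` edges `(e₀, i, true)`;
* for a terminal `e' ≠ e₀` with `f(e') = 1`, `k+1` parallel edges `(e', i, false)` join
  its endpoints; for `f(e') = 0`, a new vertex is joined to each endpoint by `k+1`
  parallel edges as above. -/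
def ValidIdx (T : Set E) (f : E → ZMod 2) (e₀ : E) (k : ℕ)
    (p : E × Fin (k + 1) × Bool) : Prop :=
  (p.1 ∉ T ∧ f p.1 = 1 ∧ p.2.1 = 0 ∧ p.2.2 = false) ∨
  (p.1 ∉ T ∧ f p.1 = 0 ∧ p.2.1 = 0) ∨
  (p.1 = e₀ ∧ f e₀ = 0 ∧ p.2.2 = false) ∨
  (p.1 = e₀ ∧ f e₀ = 1) ∨
  (p.1 ∈ T ∧ p.1 ≠ e₀ ∧ f p.1 = 1 ∧ p.2.2 = false) ∨
  (p.1 ∈ T ∧ p.1 ≠ e₀ ∧ f p.1 = 0)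

/-- The edge set of the auxiliary graph `G'`. -/
def GEdge (T : Set E) (f : E → ZMod 2) (e₀ : E) (k : ℕ) : Type _ :=
  {p : E × Fin (k + 1) × Bool // ValidIdx T f e₀ k p}

/-- First endpoint, in `V(G') = V ⊕ E` (`Sum.inl v` is an original vertex, `Sum.inr e'`
is the new vertex created for `e'`), of an edge of `G'`: the edge `(e', i, false)` is
attached at `x e'` and the edge `(e', i, true)` at `y e'`. -/
def xG' (x y : E → V) (T : Set E) (f : E → ZMod 2) (e₀ : E) (k : ℕ)
    (p : GEdge T f e₀ k) : V ⊕ E :=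
  if p.1.2.2 then Sum.inl (y p.1.1) else Sum.inl (x p.1.1)

open Classical in
/-- Second endpoint of an edge of `G'`: the new vertex `Sum.inr e'` when `e'` gets a new
vertex (subdivision vertex or `v_{e'}`), and the other original endpoint otherwise. -/
noncomputable def yG' (x y : E → V) (T : Set E) (f : E → ZMod 2) (e₀ : E) (k : ℕ)
    (p : GEdge T f e₀ k) : V ⊕ E :=
  if NeedsNew T f e₀ p.1.1 then Sum.inr p.1.1 else Sum.inl (y p.1.1)

/-- Adjacency in the auxiliary graph `G'`. -/
def AdjG' (x y : E → V) (T : Set E) (f : E → ZMod 2) (e₀ : E) (k : ℕ)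
    (w z : V ⊕ E) : Prop :=
  ∃ p : GEdge T f e₀ k,
    (xG' x y T f e₀ k p = w ∧ yG' x y T f e₀ k p = z) ∨
    (xG' x y T f e₀ k p = z ∧ yG' x y T f e₀ k p = w)

/-!
The bipartition is `(A_Y, B_Y)` itself. An edge `e'` of `G` is realised in `G'` by direct
edges between its ends or by a path through a new vertex, which lies in `A_Y` exactly when
both ends of `e'` lie in `Ȳ`. So a direct edge is monochromatic iff the ends of `e'` are on
one side, and a subdivided `e'` has a monochromatic half (and then only one) iff its ends
are separated. Which edges are subdivided is decided by `f(e')` and by whether `e' = e₀`,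
so that in both cases `e'` contributes to `(e₀, (Y, Ȳ))` iff `e' ≠ e₀`. As `(Y, Ȳ)` almost
fits `e₀`, `e'` is then a non-terminal edge, which carries at most one monochromatic edge
of `G'`; hence `|S_Y| ≤ |cont(e₀, Y) ∖ {e₀}| ≤ k`.
-/

/-- The set `U_Y`. -/
def newVerticesInCompl (x y : E → V) (T : Set E) (f : E → ZMod 2) (e₀ : E) (k : ℕ)
    (Y : Set V) : Set (V ⊕ E) :=
  {w | (∃ e' : E, w = Sum.inr e') ∧
    ∀ z : V ⊕ E, AdjG' x y T f e₀ k w z → z ∈ Sum.inl '' Yᶜ}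

/-- The side `A_Y = Y ∪ U_Y`; its complement is `B_Y`. -/
def bipartSide (x y : E → V) (T : Set E) (f : E → ZMod 2) (e₀ : E) (k : ℕ)
    (Y : Set V) : Set (V ⊕ E) :=
  Sum.inl '' Y ∪ newVerticesInCompl x y T f e₀ k Y

/-- The set `S_Y`. -/
def monochromaticEdges (x y : E → V) (T : Set E) (f : E → ZMod 2) (e₀ : E) (k : ℕ)
    (Y : Set V) : Set (GEdge T f e₀ k) :=
  {p | xG' x y T f e₀ k p ∈ bipartSide x y T f e₀ k Y ↔
    yG' x y T f e₀ k p ∈ bipartSide x y T f e₀ k Y}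

section Contrib

variable {x y : E → V} {f : E → ZMod 2} {X : Set V} {e : E}

lemma contrib_iff_eq_one_of_mem_iff (h : x e ∈ X ↔ y e ∈ X) : Contrib x y f X e ↔ f e = 1 := by
  unfold Contrib; tauto

lemma contrib_iff_eq_zero_of_not_iff (h : ¬(x e ∈ X ↔ y e ∈ X)) :
    Contrib x y f X e ↔ f e = 0 := by
  unfold Contrib; tauto

end Contrib

lemma zmod_two_eq_one_iff_ne_zero (a : ZMod 2) : a = 1 ↔ a ≠ 0 := by
  revert a; decide

/-- At most one of the two halves of a subdivided edge is monochromatic. -/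
lemma Bool.eq_of_ite_mem_iff {α : Type*} {s : Set α} {u v : α} {b b' : Bool}
    (hb : (if b then v else u) ∈ s ↔ u ∉ s ∧ v ∉ s)
    (hb' : (if b' then v else u) ∈ s ↔ u ∉ s ∧ v ∉ s) : b = b' := by
  cases b <;> cases b' <;> simp only [Bool.false_eq_true, if_true, if_false] at hb hb' <;>
    first | rfl | tauto

section AuxiliaryGraph

variable {x y : E → V} {T : Set E} {f : E → ZMod 2} {e₀ : E} {k : ℕ} {Y : Set V}

lemma needsNew_iff (he₀ : e₀ ∈ T) (e : E) : NeedsNew T f e₀ e ↔ (f e = 0 ↔ e ≠ e₀) := by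
  unfold NeedsNew
  rw [zmod_two_eq_one_iff_ne_zero]
  by_cases he : e = e₀
  · subst he; tauto
  · tauto

lemma validIdx_of_needsNew {e : E} (he : NeedsNew T f e₀ e) (b : Bool) :
    ValidIdx T f e₀ k (e, 0, b) := by
  unfold ValidIdx; unfold NeedsNew at he; tauto

lemma ValidIdx.bool_eq_false {p : E × Fin (k + 1) × Bool} (hp : ValidIdx T f e₀ k p)
    (hnew : ¬ NeedsNew T f e₀ p.1) : p.2.2 = false := by
  unfold ValidIdx at hp; unfold NeedsNew at hnew; tauto

lemma ValidIdx.idx_eq_zero {p : E × Fin (k + 1) × Bool} (hp : ValidIdx T f e₀ k p)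
    (he₀ : e₀ ∈ T) (hT : p.1 ∉ T) : p.2.1 = 0 := by
  have : p.1 ≠ e₀ := fun h => hT (h ▸ he₀)
  unfold ValidIdx at hp; tauto

lemma xG'_eq (p : GEdge T f e₀ k) :
    xG' x y T f e₀ k p = Sum.inl (if p.1.2.2 then y p.1.1 else x p.1.1) := by
  unfold xG'; split <;> rfl

lemma yG'_of_needsNew {p : GEdge T f e₀ k} (h : NeedsNew T f e₀ p.1.1) :
    yG' x y T f e₀ k p = Sum.inr p.1.1 := if_pos h

lemma yG'_of_not_needsNew {p : GEdge T f e₀ k} (h : ¬ NeedsNew T f e₀ p.1.1) :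
    yG' x y T f e₀ k p = Sum.inl (y p.1.1) := if_neg h

lemma adjG'_inr_iff {e : E} (he : NeedsNew T f e₀ e) (z : V ⊕ E) :
    AdjG' x y T f e₀ k (Sum.inr e) z ↔ z = Sum.inl (x e) ∨ z = Sum.inl (y e) := by
  constructor
  · rintro ⟨p, ⟨hx, -⟩ | ⟨hz, hy⟩⟩
    · simp [xG'_eq] at hx
    · have hnew : NeedsNew T f e₀ p.1.1 := by
        by_contra h; simp [yG'_of_not_needsNew h] at hy
      obtain rfl : p.1.1 = e := by simpa [yG'_of_needsNew hnew] using hy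
      rw [← hz, xG'_eq]; split <;> simp
  · rintro (rfl | rfl)
    · exact ⟨⟨(e, 0, false), validIdx_of_needsNew he false⟩, Or.inr ⟨rfl, yG'_of_needsNew he⟩⟩
    · exact ⟨⟨(e, 0, true), validIdx_of_needsNew he true⟩, Or.inr ⟨rfl, yG'_of_needsNew he⟩⟩

lemma inl_mem_bipartSide (v : V) :
    (Sum.inl v : V ⊕ E) ∈ bipartSide x y T f e₀ k Y ↔ v ∈ Y := by
  simp [bipartSide, newVerticesInCompl]

lemma inr_mem_bipartSide {e : E} (he : NeedsNew T f e₀ e) :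
    (Sum.inr e : V ⊕ E) ∈ bipartSide x y T f e₀ k Y ↔ x e ∉ Y ∧ y e ∉ Y := by
  simp [bipartSide, newVerticesInCompl, adjG'_inr_iff he]

lemma mem_monochromaticEdges {p : GEdge T f e₀ k} :
    p ∈ monochromaticEdges x y T f e₀ k Y ↔
      (xG' x y T f e₀ k p ∈ bipartSide x y T f e₀ k Y ↔
        yG' x y T f e₀ k p ∈ bipartSide x y T f e₀ k Y) :=
  Iff.rfl

lemma mem_monochromaticEdges_of_needsNew {p : GEdge T f e₀ k}
    (h : NeedsNew T f e₀ p.1.1) :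
    p ∈ monochromaticEdges x y T f e₀ k Y ↔
      ((if p.1.2.2 then y p.1.1 else x p.1.1) ∈ Y ↔ x p.1.1 ∉ Y ∧ y p.1.1 ∉ Y) := by
  rw [mem_monochromaticEdges, xG'_eq, yG'_of_needsNew h,
    inl_mem_bipartSide, inr_mem_bipartSide h]

lemma mem_monochromaticEdges_of_not_needsNew {p : GEdge T f e₀ k}
    (h : ¬ NeedsNew T f e₀ p.1.1) :
    p ∈ monochromaticEdges x y T f e₀ k Y ↔ (x p.1.1 ∈ Y ↔ y p.1.1 ∈ Y) := by
  rw [mem_monochromaticEdges, xG'_eq, yG'_of_not_needsNew h,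
    inl_mem_bipartSide, inl_mem_bipartSide, p.2.bool_eq_false h]
  rfl

lemma contrib_iff_ne_of_mem_monochromaticEdges (he₀ : e₀ ∈ T) {p : GEdge T f e₀ k}
    (hp : p ∈ monochromaticEdges x y T f e₀ k Y) :
    Contrib x y f Y p.1.1 ↔ p.1.1 ≠ e₀ := by
  by_cases hnew : NeedsNew T f e₀ p.1.1
  · have hsep : ¬(x p.1.1 ∈ Y ↔ y p.1.1 ∈ Y) := by
      rw [mem_monochromaticEdges_of_needsNew hnew] at hp
      split at hp <;> tauto
    rw [contrib_iff_eq_zero_of_not_iff hsep, ← needsNew_iff he₀]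
    exact hnew
  · rw [contrib_iff_eq_one_of_mem_iff ((mem_monochromaticEdges_of_not_needsNew hnew).1 hp),
      zmod_two_eq_one_iff_ne_zero]
    rw [needsNew_iff he₀] at hnew
    tauto

lemma fst_injOn_monochromaticEdges (he₀ : e₀ ∈ T) :
    Set.InjOn (fun p : GEdge T f e₀ k => p.1.1)
      {p | p ∈ monochromaticEdges x y T f e₀ k Y ∧ p.1.1 ∉ T} := by
  intro p ⟨hp, hT⟩ q ⟨hq, _⟩ (hpq : p.1.1 = q.1.1)
  have hidx : p.1.2.1 = q.1.2.1 := by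
    rw [p.2.idx_eq_zero he₀ hT, q.2.idx_eq_zero he₀ (hpq ▸ hT)]
  have hbool : p.1.2.2 = q.1.2.2 := by
    by_cases hnew : NeedsNew T f e₀ p.1.1
    · rw [mem_monochromaticEdges_of_needsNew hnew] at hp
      rw [mem_monochromaticEdges_of_needsNew (hpq ▸ hnew), ← hpq] at hq
      exact Bool.eq_of_ite_mem_iff hp hq
    · rw [p.2.bool_eq_false hnew, q.2.bool_eq_false (hpq ▸ hnew)]
  exact Subtype.ext (Prod.ext hpq (Prod.ext hidx hbool))

lemma fst_notMem_and_contrib_of_mem_monochromaticEdges (he₀ : e₀ ∈ T)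
    (hY : Preliminary x y f T k e₀ Y) {p : GEdge T f e₀ k}
    (hp : p ∈ monochromaticEdges x y T f e₀ k Y) :
    p.1.1 ∉ T ∧ p.1.1 ∈ {e' : E | Contrib x y f Y e' ∧ e' ≠ e₀} := by
  obtain ⟨hcontrib₀, hterminal, -⟩ := hY
  have hne : p.1.1 ≠ e₀ := fun h =>
    (contrib_iff_ne_of_mem_monochromaticEdges he₀ hp).1 (by rwa [h]) h
  have hC := (contrib_iff_ne_of_mem_monochromaticEdges he₀ hp).2 hne
  exact ⟨fun hT => hterminal _ hT hne hC, hC, hne⟩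

end AuxiliaryGraph

theorem preliminary_partition_gives_small_bipartization_general
    [Fintype E]
    (x y : E → V)
    (T : Set E) (f : E → ZMod 2) (k : ℕ) (e₀ : E) (he₀ : e₀ ∈ T)
    (Y : Set V) (hY : Preliminary x y f T k e₀ Y)
    (UY AY : Set (V ⊕ E))
    (hUY : UY = {w : V ⊕ E | (∃ e' : E, w = Sum.inr e') ∧
      ∀ z : V ⊕ E, AdjG' x y T f e₀ k w z → z ∈ Sum.inl '' Yᶜ})
    (hAY : AY = (Sum.inl '' Y) ∪ UY)
    (SY : Set (GEdge T f e₀ k))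
    (hSY : SY = {p : GEdge T f e₀ k |
      (xG' x y T f e₀ k p ∈ AY ↔ yG' x y T f e₀ k p ∈ AY)}) :
    SY.ncard ≤ k ∧
    ∃ Part : Set (V ⊕ E), ∀ p : GEdge T f e₀ k, p ∉ SY →
      Xor' (xG' x y T f e₀ k p ∈ Part) (yG' x y T f e₀ k p ∈ Part) := by
  obtain rfl : SY = monochromaticEdges x y T f e₀ k Y := by subst_vars; rfl
  refine ⟨?_, bipartSide x y T f e₀ k Y, fun p hp => (xor_iff_not_iff _ _).2 hp⟩
  have hS {p} (hp : p ∈ monochromaticEdges x y T f e₀ k Y) :=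
    fst_notMem_and_contrib_of_mem_monochromaticEdges he₀ hY hp
  calc _ ≤ {e' : E | Contrib x y f Y e' ∧ e' ≠ e₀}.ncard :=
        Set.ncard_le_ncard_of_injOn _ (fun _ hp => (hS hp).2)
          ((fst_injOn_monochromaticEdges he₀).mono fun _ hp => by exact ⟨hp, (hS hp).1⟩)
          (Set.toFinite _)
    _ ≤ k := hY.2.2

/-- Let `(Y, Ȳ)` be an `e₀`-preliminary partition of `V(G)`. Let `U_Y`
be the set of new vertices of `G'` all of whose neighbours lie in `Ȳ`, let
`A_Y = Y ∪ U_Y` (inside `V(G')`), `B_Y = V(G') ∖ A_Y`, and let `S_Y` be the set of edges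
of `G'` with both endpoints in `A_Y` or both in `B_Y`. Then `|S_Y| ≤ k` and `G' ∖ S_Y`
is bipartite. -/
theorem preliminary_partition_gives_small_bipartization
    [Fintype V] [Fintype E]
    (x y : E → V) (hloop : ∀ e : E, x e ≠ y e)
    (T : Set E) (f : E → ZMod 2) (k : ℕ) (e₀ : E) (he₀ : e₀ ∈ T)
    (Y : Set V) (hY : Preliminary x y f T k e₀ Y)
    (UY AY : Set (V ⊕ E))
    (hUY : UY = {w : V ⊕ E | (∃ e' : E, w = Sum.inr e') ∧
      ∀ z : V ⊕ E, AdjG' x y T f e₀ k w z → z ∈ Sum.inl '' Yᶜ})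
    (hAY : AY = (Sum.inl '' Y) ∪ UY)
    (SY : Set (GEdge T f e₀ k))
    (hSY : SY = {p : GEdge T f e₀ k |
      (xG' x y T f e₀ k p ∈ AY ↔ yG' x y T f e₀ k p ∈ AY)}) :
    SY.ncard ≤ k ∧
    ∃ Part : Set (V ⊕ E), ∀ p : GEdge T f e₀ k, p ∉ SY →
      Xor' (xG' x y T f e₀ k p ∈ Part) (yG' x y T f e₀ k p ∈ Part) :=
  preliminary_partition_gives_small_bipartization_general x y T f k e₀ he₀ Y hY UY AY hUY hAY SY hSY
end

section
/- In the setting of an Edge-Set Cover instance with a fixed terminal e ∈ T and the auxiliary multigraph G' constructed from it, let S ⊆ E(G') with |S| ≤ k be such that G'∖S is bipartite, and let (A_S, B_S) be any partition of V(G') such that every edge of G'∖S has one endpoint in A_S and one endpoint in B_S. Then (A_S ∩ V(G), B_S ∩ V(G)) is an e-preliminary partition of V(G). -/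
variable {V E : Type*}

/-!
An intact gadget of an edge `e'` of `G` puts the endpoints of `e'` on opposite sides of
`A_S` when it is a direct edge, and on the same side when it is a path through a new
vertex. The construction chooses the gadget so that either way `e'` then contributes
exactly when `e' = e₀`. Terminal gadgets consist of `k + 1` parallel copies and survive
the deletion of the at most `k` edges of `S`, so the partition almost fits `e₀`; every
other contributing edge has lost an edge of its gadget to `S`, so there are at most `k`.
-/

section

variable {T : Set E} {f : E → ZMod 2} {e₀ : E} {k : ℕ}

lemma ZMod.eq_zero_iff_ne_one (a : ZMod 2) : a = 0 ↔ a ≠ 1 := by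
  revert a; decide

lemma contrib_iff (x y : E → V) (X : Set V) (e' : E) :
    Contrib x y f X e' ↔ ((x e' ∈ X ↔ y e' ∈ X) ↔ f e' = 1) := by
  have h01 := (f e').eq_zero_iff_ne_one
  unfold Contrib
  tauto

lemma needsNew_iff_of_ne {e' : E} (he' : e' ≠ e₀) : NeedsNew T f e₀ e' ↔ f e' = 0 := by
  unfold NeedsNew
  by_cases hT : e' ∈ T <;> simp [hT, he']

lemma needsNew_self_iff (he₀ : e₀ ∈ T) : NeedsNew T f e₀ e₀ ↔ f e₀ = 1 := by
  simp [NeedsNew, he₀]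

lemma validIdx_of_mem_or_eq_zero {e' : E} {i : Fin (k + 1)} {b : Bool}
    (hi : e' ∈ T ∨ i = 0) (hb : b = true → NeedsNew T f e₀ e') :
    ValidIdx T f e₀ k (e', i, b) := by
  have h01 := (f e').eq_zero_iff_ne_one
  unfold ValidIdx NeedsNew at *
  rcases eq_or_ne e' e₀ with rfl | he' <;> cases b <;>
    simp only [Bool.false_eq_true, Bool.true_eq_false, ne_eq, not_true_eq_false,
      IsEmpty.forall_iff, forall_const] at hb ⊢ <;> tauto

variable (T f e₀ k) in
/-- The edges of `G'` built for `e'` still join `x e'` to `y e'` in `G' ∖ S`. -/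
def GadgetSurvives (S : Set (GEdge T f e₀ k)) (e' : E) : Prop :=
  (∃ p ∉ S, p.1.1 = e' ∧ p.1.2.2 = false) ∧
    (NeedsNew T f e₀ e' → ∃ p ∉ S, p.1.1 = e' ∧ p.1.2.2 = true)

lemma exists_apply_notMem_of_ncard_le {α : Type*} [Finite α] {S : Set α}
    (hS : S.ncard ≤ k) {g : Fin (k + 1) → α} (hg : g.Injective) : ∃ i, g i ∉ S := by
  have hlt : S.ncard < (Set.range g).ncard := by
    rw [Set.ncard_range_of_injective hg, Nat.card_eq_fintype_card, Fintype.card_fin]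
    omega
  obtain ⟨_, ⟨i, rfl⟩, hi⟩ := Set.exists_mem_notMem_of_ncard_lt_ncard hlt
  exact ⟨i, hi⟩

instance [Finite E] : Finite (GEdge T f e₀ k) := Subtype.finite

lemma gadgetSurvives_of_mem [Finite E] {S : Set (GEdge T f e₀ k)} (hS : S.ncard ≤ k)
    {e' : E} (he' : e' ∈ T) : GadgetSurvives T f e₀ k S e' := by
  have survivor (b : Bool) (hb : b = true → NeedsNew T f e₀ e') :
      ∃ p ∉ S, p.1.1 = e' ∧ p.1.2.2 = b := by
    let copy (i : Fin (k + 1)) : GEdge T f e₀ k :=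
      ⟨(e', i, b), validIdx_of_mem_or_eq_zero (Or.inl he') hb⟩
    have hcopy : copy.Injective := fun i j hij => congrArg (fun p => p.1.2.1) hij
    obtain ⟨i, hi⟩ := exists_apply_notMem_of_ncard_le hS hcopy
    exact ⟨copy i, hi, rfl, rfl⟩
  exact ⟨survivor false nofun, fun hN => survivor true fun _ => hN⟩

lemma gadgetSurvives_of_forall_notMem {S : Set (GEdge T f e₀ k)} {e' : E}
    (hS : ∀ p ∈ S, p.1.1 ≠ e') : GadgetSurvives T f e₀ k S e' := by
  have survivor (b : Bool) (hb : b = true → NeedsNew T f e₀ e') :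
      ∃ p ∉ S, p.1.1 = e' ∧ p.1.2.2 = b :=
    ⟨⟨(e', 0, b), validIdx_of_mem_or_eq_zero (Or.inr rfl) hb⟩, fun hp => hS _ hp rfl, rfl, rfl⟩
  exact ⟨survivor false nofun, fun hN => survivor true fun _ => hN⟩

section bipartition

variable {x y : E → V} {S : Set (GEdge T f e₀ k)} {AS : Set (V ⊕ E)}
  (hbip : ∀ p : GEdge T f e₀ k, p ∉ S →
    Xor (xG' x y T f e₀ k p ∈ AS) (yG' x y T f e₀ k p ∈ AS))
include hbip

lemma GadgetSurvives.sameSide_iff {e' : E} (h : GadgetSurvives T f e₀ k S e') :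
    (Sum.inl (x e') ∈ AS ↔ Sum.inl (y e') ∈ AS) ↔ NeedsNew T f e₀ e' := by
  obtain ⟨⟨p, hpS, rfl, hp⟩, hnew⟩ := h
  have hx := hbip p hpS
  by_cases hN : NeedsNew T f e₀ p.1.1
  · obtain ⟨q, hqS, hq, hq'⟩ := hnew hN
    have hy := hbip q hqS
    simp only [xG', yG', hp, hq', hq, hN, if_true, if_false, Bool.false_eq_true] at hx hy
    rw [xor_def] at hx hy
    exact iff_of_true (by tauto) hN
  · simp only [xG', yG', hp, hN, if_false, Bool.false_eq_true] at hx
    rw [xor_def] at hx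
    exact iff_of_false (by tauto) hN

lemma GadgetSurvives.contrib_iff (he₀ : e₀ ∈ T) {e' : E} (h : GadgetSurvives T f e₀ k S e') :
    Contrib x y f {v | Sum.inl v ∈ AS} e' ↔ e' = e₀ := by
  rw [_root_.contrib_iff, Set.mem_ofPred_eq, Set.mem_ofPred_eq, h.sameSide_iff hbip]
  by_cases he' : e' = e₀
  · subst he'
    simp [needsNew_self_iff he₀]
  · simp [needsNew_iff_of_ne he', he', (f e').eq_zero_iff_ne_one]

end bipartition

end

theorem bipartization_gives_preliminary_partition_general
    [Fintype E]
    (x y : E → V)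
    (T : Set E) (f : E → ZMod 2) (k : ℕ) (e₀ : E) (he₀ : e₀ ∈ T)
    (S : Set (GEdge T f e₀ k)) (hS : S.ncard ≤ k)
    (AS : Set (V ⊕ E))
    (hbip : ∀ p : GEdge T f e₀ k, p ∉ S →
      Xor' (xG' x y T f e₀ k p ∈ AS) (yG' x y T f e₀ k p ∈ AS)) :
    Preliminary x y f T k e₀ {v : V | Sum.inl v ∈ AS} := by
  have contrib_iff_of_survives {e' : E} (h : GadgetSurvives T f e₀ k S e') :=
    h.contrib_iff hbip he₀
  have hcover : {e' | Contrib x y f {v | Sum.inl v ∈ AS} e' ∧ e' ≠ e₀} ⊆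
      (fun p : GEdge T f e₀ k => p.1.1) '' S := by
    rintro e' ⟨hc, hne⟩
    by_contra hS'
    refine hne ((contrib_iff_of_survives (gadgetSurvives_of_forall_notMem ?_)).1 hc)
    exact fun p hp hpe => hS' ⟨p, hp, hpe⟩
  refine ⟨(contrib_iff_of_survives (gadgetSurvives_of_mem hS he₀)).2 rfl, ?_, ?_⟩
  · exact fun e' he' hne => (contrib_iff_of_survives (gadgetSurvives_of_mem hS he')).not.2 hne
  · calc _ ≤ ((fun p : GEdge T f e₀ k => p.1.1) '' S).ncard := Set.ncard_le_ncard hcover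
      _ ≤ S.ncard := Set.ncard_image_le
      _ ≤ k := hS

/-- Let `S ⊆ E(G')` with `|S| ≤ k` be such that `G' ∖ S` is bipartite,
witnessed by a partition `(A_S, B_S)` of `V(G')` (with `B_S = A_Sᶜ`) such that every edge
of `G' ∖ S` has one endpoint in `A_S` and one in `B_S`. Then
`(A_S ∩ V(G), B_S ∩ V(G))` is an `e₀`-preliminary partition of `V(G)`. -/
theorem bipartization_gives_preliminary_partition
    [Fintype V] [Fintype E]
    (x y : E → V) (hloop : ∀ e : E, x e ≠ y e)
    (T : Set E) (f : E → ZMod 2) (k : ℕ) (e₀ : E) (he₀ : e₀ ∈ T)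
    (S : Set (GEdge T f e₀ k)) (hS : S.ncard ≤ k)
    (AS : Set (V ⊕ E))
    (hbip : ∀ p : GEdge T f e₀ k, p ∉ S →
      Xor' (xG' x y T f e₀ k p ∈ AS) (yG' x y T f e₀ k p ∈ AS)) :
    Preliminary x y f T k e₀ {v : V | Sum.inl v ∈ AS} :=
  bipartization_gives_preliminary_partition_general x y T f k e₀ he₀ S hS AS hbip
end

section
/- Let G be a finite simple graph, k ≥ 2 an integer, and X_1,…,X_k a partition of V(G) into sets each of which is independent in G. Construct the simple graph G' with vertex set V(G) ∪ {u_1,…,u_k} ∪ {x_1,…,x_k} ∪ {y_{ij} : 1 ≤ i < j ≤ k} (all new vertices distinct), whose edges are: all edges of G; the edge u_i v for every i ∈ {1,…,k} and every v ∈ X_i; and the edge u_i u_j for all 1 ≤ i < j ≤ k (the vertices x_1,…,x_k and y_{ij} are isolated). Let S = {u_iu_j : 1 ≤ i < j ≤ k} ⊆ E(G'). Let I(G') be the incidence matrix of G' over GF(2), and let P be the matrix over GF(2) with rows indexed by V(G') and columns indexed by E(G') defined by: the entry in row x_i and column e is 1 if and only if e = u_i v for some v ∈ X_i, or e = u_su_t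 with i ∈ {s,t}; the entry in row y_{ij} and column e is 1 if and only if e is an edge of G with one endpoint in X_i and the other in X_j, or e = u_iu_j; all other entries of P are 0. Let A = I(G') + P and k' = k(k+1)/2. Then G has a clique K with |K ∩ X_i| = 1 for every i ∈ {1,…,k} if and only if there exists a set F ⊆ E(G')∖S with |F| ≤ k' such that for every e ∈ S the column A^e lies in the GF(2)-span of the columns {A^f : f ∈ F}. -/
open Matrix

attribute [local instance] Classical.propDecidable

/-- The vertex set of the graph `G'` in the Multicolored Clique reduction:
the original vertices of `G`, the vertices `u_1, …, u_k`, the vertices `x_1, …, x_k`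
and the vertices `y_{ij}` for `1 ≤ i < j ≤ k`. -/
abbrev MCVert (V : Type*) (k : ℕ) : Type _ :=
  V ⊕ Fin k ⊕ Fin k ⊕ {p : Fin k × Fin k // p.1 < p.2}

/-- The edge set of the graph `G'`: the edges of `G`, one edge `u_{σ v} v` for each
vertex `v` of `G` (these are exactly the edges `u_i v` with `v ∈ X_i`), and the edges
`u_i u_j` for `1 ≤ i < j ≤ k` (the set `S`). The vertices `x_i` and `y_{ij}` are
isolated. -/
abbrev MCEdge {V : Type*} (G : SimpleGraph V) (k : ℕ) : Type _ :=
  ↥G.edgeSet ⊕ V ⊕ {p : Fin k × Fin k // p.1 < p.2}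

/-- The incidence matrix of `G'` over GF(2). -/
noncomputable def incMC {V : Type*} (G : SimpleGraph V) (k : ℕ) (σ : V → Fin k) :
    Matrix (MCVert V k) (MCEdge G k) (ZMod 2) :=
  fun w e =>
    match e with
    | Sum.inl s => if ∃ v : V, w = Sum.inl v ∧ v ∈ (s : Sym2 V) then 1 else 0
    | Sum.inr (Sum.inl v) =>
        if w = Sum.inl v ∨ w = Sum.inr (Sum.inl (σ v)) then 1 else 0
    | Sum.inr (Sum.inr p) =>
        if w = Sum.inr (Sum.inl p.1.1) ∨ w = Sum.inr (Sum.inl p.1.2) then 1 else 0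

/-- The perturbation matrix `P` of the Multicolored Clique reduction. Its nonzero rows are
indexed by the vertices `x_i` and `y_{ij}`: the entry in row `x_i` and column `e` is `1`
iff `e = u_i v` with `v ∈ X_i` or `e = u_s u_t` with `i ∈ {s, t}`; the entry in row
`y_{ij}` and column `e` is `1` iff `e` is an edge of `G` between `X_i` and `X_j`, or
`e = u_i u_j`. -/
noncomputable def pertMC {V : Type*} (G : SimpleGraph V) (k : ℕ) (σ : V → Fin k) :
    Matrix (MCVert V k) (MCEdge G k) (ZMod 2) :=
  fun w e =>
    match w with
    | Sum.inr (Sum.inr (Sum.inl i)) =>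
        match e with
        | Sum.inr (Sum.inl v) => if σ v = i then 1 else 0
        | Sum.inr (Sum.inr p) => if p.1.1 = i ∨ p.1.2 = i then 1 else 0
        | _ => 0
    | Sum.inr (Sum.inr (Sum.inr q)) =>
        match e with
        | Sum.inl s =>
            if ∃ a b : V, (s : Sym2 V) = s(a, b) ∧ σ a = q.1.1 ∧ σ b = q.1.2
            then 1 else 0
        | Sum.inr (Sum.inr p) => if p = q then 1 else 0
        | _ => 0
    | _ => 0

/-!
Write `δ_r` for the standard basis vector of row `r`. Over GF(2) the columns of `A` are
`A^{u_{σ v} v} = δ_v + δ_{u_{σ v}} + δ_{x_{σ v}}`,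
`A^{ab} = δ_a + δ_b + δ_{y_{σ a, σ b}}` (for `σ a < σ b`) and
`A^{u_i u_j} = δ_{u_i} + δ_{u_j} + δ_{x_i} + δ_{x_j} + δ_{y_{ij}}`, hence
`A^{u_i u_j} = A^{v_i v_j} + A^{u_i v_i} + A^{u_j v_j}` whenever `σ v_i = i`, `σ v_j = j`:
a multicoloured clique `v_1, …, v_k` yields a cover by its `k(k-1)/2` edges and `k` spokes.

Conversely, a functional vanishing on the columns of `F` vanishes on their span. Applied to
`δ_{x_i}` and `δ_{y_{ij}}` this shows that `F` contains a spoke of every colour and an edge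
between every two colour classes, so by the budget `F` consists of exactly one spoke `u_i v_i`
per colour and one edge `e_{ij}` per pair of colours. If an endpoint `w` of `e_{ij}` were not
the chosen vertex of its colour, then `δ_w + ∑_{w ∈ e_q} δ_{y_q}` would vanish on every column
of `F` but not on `A^{u_i u_j}`; so `e_{ij} = v_i v_j` and the `v_i` form a clique.
-/

namespace Matrix

lemma dotProduct_eq_zero_of_mem_span {m R : Type*} [Fintype m] [CommSemiring R]
    {φ x : m → R} {T : Set (m → R)} (hT : ∀ t ∈ T, φ ⬝ᵥ t = 0)
    (hx : x ∈ Submodule.span R T) : φ ⬝ᵥ x = 0 :=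
  Submodule.span_le (p := LinearMap.ker (dotProductEquiv R m φ)) |>.2 hT hx

end Matrix

namespace MulticoloredClique

open Function Set

abbrev OrdPair (k : ℕ) : Type := {p : Fin k × Fin k // p.1 < p.2}

lemma card_ordPair (k : ℕ) : Nat.card (OrdPair k) = k.choose 2 := by
  rw [Nat.card_eq_fintype_card, Fintype.card_subtype, Fintype.card_product_filter_lt,
    Fintype.card_fin]

lemma exists_ordPair_mem {k : ℕ} (hk : 2 ≤ k) (i : Fin k) :
    ∃ p : OrdPair k, p.1.1 = i ∨ p.1.2 = i := by
  by_cases hi : i.val = 0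
  · exact ⟨⟨(i, ⟨1, hk⟩), by simp [Fin.lt_def, hi]⟩, Or.inl rfl⟩
  · exact ⟨⟨(⟨0, by omega⟩, i), by simp [Fin.lt_def]; omega⟩, Or.inr rfl⟩

variable {V : Type*} {k : ℕ}

abbrev gVert (v : V) : MCVert V k := Sum.inl v
abbrev uVert (i : Fin k) : MCVert V k := Sum.inr (Sum.inl i)
abbrev xVert (i : Fin k) : MCVert V k := Sum.inr (Sum.inr (Sum.inl i))
abbrev yVert (q : OrdPair k) : MCVert V k := Sum.inr (Sum.inr (Sum.inr q))

variable {G : SimpleGraph V}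

abbrev gEdge {a b : V} (h : G.Adj a b) : MCEdge G k := Sum.inl ⟨s(a, b), h⟩
abbrev spoke (v : V) : MCEdge G k := Sum.inr (Sum.inl v)
abbrev terminal (p : OrdPair k) : MCEdge G k := Sum.inr (Sum.inr p)

variable (G) (σ : V → Fin k)

noncomputable abbrev reductionMatrix : Matrix (MCVert V k) (MCEdge G k) (ZMod 2) :=
  incMC G k σ + pertMC G k σ

lemma col_spoke (v : V) :
    (reductionMatrix G σ)ᵀ (spoke v) =
      Pi.single (gVert v) 1 + Pi.single (uVert (σ v)) 1 + Pi.single (xVert (σ v)) 1 := by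
  ext (w | i | i | q) <;> simp [incMC, pertMC, Pi.single_apply, eq_comm]

lemma col_terminal (p : OrdPair k) :
    (reductionMatrix G σ)ᵀ (terminal p) =
      Pi.single (uVert p.1.1) 1 + Pi.single (uVert p.1.2) 1 + Pi.single (xVert p.1.1) 1 +
        Pi.single (xVert p.1.2) 1 + Pi.single (yVert p) 1 := by
  have hp := p.2.ne
  ext (w | i | i | q) <;> simp [incMC, pertMC, Pi.single_apply, eq_comm]
  all_goals split_ifs <;> simp_all

lemma exists_sym2_eq_iff_of_colors {a b : V} {q : OrdPair k} (ha : σ a = q.1.1)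
    (hb : σ b = q.1.2) (q' : OrdPair k) :
    (∃ x y : V, s(a, b) = s(x, y) ∧ σ x = q'.1.1 ∧ σ y = q'.1.2) ↔ q' = q := by
  constructor
  · rintro ⟨x, y, hxy, hx, hy⟩
    rcases Sym2.eq_iff.1 hxy with ⟨rfl, rfl⟩ | ⟨rfl, rfl⟩
    · exact Subtype.ext (Prod.ext (hx.symm.trans ha) (hy.symm.trans hb))
    · exact absurd (hb ▸ ha ▸ hy ▸ hx ▸ q'.2) (lt_asymm q.2)
  · rintro rfl
    exact ⟨a, b, rfl, ha, hb⟩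

lemma col_gEdge {a b : V} (h : G.Adj a b) {q : OrdPair k} (ha : σ a = q.1.1)
    (hb : σ b = q.1.2) :
    (reductionMatrix G σ)ᵀ (gEdge h) =
      Pi.single (gVert a) 1 + Pi.single (gVert b) 1 + Pi.single (yVert q) 1 := by
  ext (w | i | i | q')
  · have := h.ne
    simp only [transpose_apply, Matrix.add_apply, incMC, pertMC]
    by_cases hw : w = a <;> by_cases hw' : w = b <;> simp_all
  · simp [incMC, pertMC]
  · simp [incMC, pertMC]
  · simp only [transpose_apply, Matrix.add_apply, incMC, pertMC,
      exists_sym2_eq_iff_of_colors σ ha hb]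
    simp [Pi.single_apply]

lemma col_terminal_eq_add {a b : V} (h : G.Adj a b) {p : OrdPair k} (ha : σ a = p.1.1)
    (hb : σ b = p.1.2) :
    (reductionMatrix G σ)ᵀ (terminal p) =
      (reductionMatrix G σ)ᵀ (gEdge h) + (reductionMatrix G σ)ᵀ (spoke a) +
        (reductionMatrix G σ)ᵀ (spoke b) := by
  rw [col_terminal, col_gEdge G σ h ha hb, col_spoke, col_spoke, ha, hb]
  ext w
  simp only [Pi.add_apply]
  abel_nf
  simp only [CharTwo.two_zsmul, add_zero]

variable {G}

def coverEdges (v : Fin k → V) {a b : OrdPair k → V} (h : ∀ q, G.Adj (a q) (b q)) :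
    Fin k ⊕ OrdPair k → MCEdge G k :=
  Sum.elim (fun i => spoke (v i)) (fun q => gEdge (h q))

lemma coverEdges_injective {v : Fin k → V} {a b : OrdPair k → V} (h : ∀ q, G.Adj (a q) (b q))
    (hv : ∀ i, σ (v i) = i) (ha : ∀ q, σ (a q) = q.1.1) (hb : ∀ q, σ (b q) = q.1.2) :
    Injective (coverEdges v h) := by
  rintro (i | p) (j | q) hpq <;>
    simp only [coverEdges, Sum.elim_inl, Sum.elim_inr, Sum.inl.injEq, Sum.inr.injEq,
      reduceCtorEq] at hpq
  · rw [← hv i, ← hv j, hpq]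
  · rw [(exists_sym2_eq_iff_of_colors σ (ha q) (hb q) p).1
      ⟨a p, b p, (congrArg Subtype.val hpq).symm, ha p, hb p⟩]

lemma ncard_range_coverEdges {v : Fin k → V} {a b : OrdPair k → V}
    (h : ∀ q, G.Adj (a q) (b q)) (hv : ∀ i, σ (v i) = i) (ha : ∀ q, σ (a q) = q.1.1)
    (hb : ∀ q, σ (b q) = q.1.2) :
    (range (coverEdges v h)).ncard = k * (k + 1) / 2 := by
  rw [ncard_range_of_injective (coverEdges_injective σ h hv ha hb), Nat.card_sum, Nat.card_fin,
    card_ordPair, Nat.choose_two_right, add_comm, ← Nat.triangle_succ, Nat.add_sub_cancel,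
    mul_comm]

lemma disjoint_range_coverEdges {v : Fin k → V} {a b : OrdPair k → V}
    (h : ∀ q, G.Adj (a q) (b q)) :
    Disjoint (range (coverEdges v h)) (range (terminal (G := G))) := by
  rw [Set.disjoint_left]
  rintro _ ⟨i | q, rfl⟩ ⟨p, hp⟩ <;> simp [coverEdges] at hp

lemma terminal_mem_span_coverEdges {v : Fin k → V} (hv : ∀ i, σ (v i) = i)
    (hadj : ∀ q : OrdPair k, G.Adj (v q.1.1) (v q.1.2)) (p : OrdPair k) :
    (reductionMatrix G σ)ᵀ (terminal p) ∈
      Submodule.span (ZMod 2) ((reductionMatrix G σ)ᵀ '' range (coverEdges v hadj)) := by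
  have mem (x : Fin k ⊕ OrdPair k) : (reductionMatrix G σ)ᵀ (coverEdges v hadj x) ∈
      Submodule.span (ZMod 2) ((reductionMatrix G σ)ᵀ '' range (coverEdges v hadj)) :=
    Submodule.subset_span (mem_image_of_mem _ (mem_range_self x))
  rw [col_terminal_eq_add G σ (hadj p) (hv _) (hv _)]
  exact add_mem (add_mem (mem (.inr p)) (mem (.inl p.1.1))) (mem (.inl p.1.2))

lemma exists_rainbow_clique_iff_exists_transversal :
    (∃ K : Finset V, G.IsClique (K : Set V) ∧
        ∀ i : Fin k, (K.filter fun v => σ v = i).card = 1) ↔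
      ∃ v : Fin k → V, (∀ i, σ (v i) = i) ∧ ∀ p : OrdPair k, G.Adj (v p.1.1) (v p.1.2) := by
  constructor
  · rintro ⟨K, hK, hcard⟩
    choose v hv using fun i => Finset.card_eq_one.1 (hcard i)
    have hvK (i : Fin k) : v i ∈ K ∧ σ (v i) = i :=
      Finset.mem_filter.1 (hv i ▸ Finset.mem_singleton_self (v i))
    refine ⟨v, fun i => (hvK i).2, fun p => hK (hvK _).1 (hvK _).1 fun hp => p.2.ne ?_⟩
    rw [← (hvK p.1.1).2, ← (hvK p.1.2).2, hp]
  · rintro ⟨v, hv, hadj⟩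
    refine ⟨Finset.univ.image v, ?_, fun i => Finset.card_eq_one.2 ⟨v i, ?_⟩⟩
    · simp only [Finset.coe_image, Finset.coe_univ, image_univ]
      rintro _ ⟨i, rfl⟩ _ ⟨j, rfl⟩ hij
      rcases lt_or_gt_of_ne (ne_of_apply_ne v hij) with hlt | hlt
      exacts [hadj ⟨(i, j), hlt⟩, (hadj ⟨(j, i), hlt⟩).symm]
    · ext w
      simp only [Finset.mem_filter, Finset.mem_image, Finset.mem_univ, true_and,
        Finset.mem_singleton]
      constructor
      · rintro ⟨⟨j, rfl⟩, rfl⟩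
        rw [hv]
      · rintro rfl
        exact ⟨⟨i, rfl⟩, hv i⟩

variable [Fintype V]

lemma exists_spoke_mem (hk : 2 ≤ k) {F : Set (MCEdge G k)}
    (hF : Disjoint F (range (terminal (G := G))))
    (hspan : ∀ p : OrdPair k, (reductionMatrix G σ)ᵀ (terminal p) ∈
      Submodule.span (ZMod 2) ((reductionMatrix G σ)ᵀ '' F)) (i : Fin k) :
    ∃ v, σ v = i ∧ spoke v ∈ F := by
  by_contra! hno
  obtain ⟨p, hp⟩ := exists_ordPair_mem hk i
  have key := dotProduct_eq_zero_of_mem_span (φ := Pi.single (xVert i) 1) ?_ (hspan p)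
  · rw [single_dotProduct, col_terminal] at key
    rcases hp with rfl | rfl <;> simp [p.2.ne, p.2.ne'] at key
  · rintro _ ⟨e | v | q, he, rfl⟩
    · simp [single_dotProduct, incMC, pertMC]
    · have : σ v ≠ i := fun hv => hno v hv he
      simp [col_spoke, this]
    · exact absurd ⟨q, rfl⟩ (Set.disjoint_left.1 hF he)

lemma exists_gEdge_mem {F : Set (MCEdge G k)} (hF : Disjoint F (range (terminal (G := G))))
    (hspan : ∀ p : OrdPair k, (reductionMatrix G σ)ᵀ (terminal p) ∈
      Submodule.span (ZMod 2) ((reductionMatrix G σ)ᵀ '' F)) (q : OrdPair k) :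
    ∃ a b, ∃ h : G.Adj a b, σ a = q.1.1 ∧ σ b = q.1.2 ∧ gEdge h ∈ F := by
  by_contra! hno
  have key := dotProduct_eq_zero_of_mem_span (φ := Pi.single (yVert q) 1) ?_ (hspan q)
  · rw [single_dotProduct, col_terminal] at key
    simp at key
  · rintro _ ⟨⟨e, he⟩ | v | p, heF, rfl⟩
    · have : ¬ ∃ x y, e = s(x, y) ∧ σ x = q.1.1 ∧ σ y = q.1.2 := by
        rintro ⟨x, y, rfl, hx, hy⟩
        exact hno x y he hx hy heF
      simp [single_dotProduct, incMC, pertMC, this]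
    · simp [single_dotProduct, incMC, pertMC]
    · exact absurd ⟨p, rfl⟩ (Set.disjoint_left.1 hF heF)

lemma endpoint_eq_of_subset_range_coverEdges {v : Fin k → V} {a b : OrdPair k → V}
    (h : ∀ q, G.Adj (a q) (b q)) (hv : ∀ i, σ (v i) = i) (ha : ∀ q, σ (a q) = q.1.1)
    (hb : ∀ q, σ (b q) = q.1.2) {F : Set (MCEdge G k)} (hF : F ⊆ range (coverEdges v h))
    {p : OrdPair k} (hspan : (reductionMatrix G σ)ᵀ (terminal p) ∈
      Submodule.span (ZMod 2) ((reductionMatrix G σ)ᵀ '' F))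
    {w : V} (hw : w = a p ∨ w = b p) : w = v (σ w) := by
  by_contra hne
  let φ : MCVert V k → ZMod 2 := Sum.elim (fun w' => if w' = w then 1 else 0)
    (Sum.elim 0 (Sum.elim 0 fun q => if w = a q ∨ w = b q then 1 else 0))
  have key := dotProduct_eq_zero_of_mem_span (φ := φ) ?_ hspan
  · simp [col_terminal, φ, dotProduct_add, dotProduct_single, hw] at key
  · rintro _ ⟨_, hf, rfl⟩
    obtain ⟨i | q, rfl⟩ := hF hf
    · have : v i ≠ w := by rintro rfl; exact hne (by rw [hv])
      simp [coverEdges, col_spoke, φ, dotProduct_add, dotProduct_single, this]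
    · have := (h q).ne
      simp only [coverEdges, Sum.elim_inr, col_gEdge G σ (h q) (ha q) (hb q), dotProduct_add,
        dotProduct_single, mul_one, φ, Sum.elim_inl, Sum.elim_inr]
      split_ifs <;> grind

lemma exists_transversal_of_mem_span (hk : 2 ≤ k) {F : Set (MCEdge G k)}
    (hdisj : Disjoint F (range (terminal (G := G)))) (hcard : F.ncard ≤ k * (k + 1) / 2)
    (hspan : ∀ p : OrdPair k, (reductionMatrix G σ)ᵀ (terminal p) ∈
      Submodule.span (ZMod 2) ((reductionMatrix G σ)ᵀ '' F)) :
    ∃ v : Fin k → V, (∀ i, σ (v i) = i) ∧ ∀ p : OrdPair k, G.Adj (v p.1.1) (v p.1.2) := by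
  choose v hv hvF using exists_spoke_mem σ hk hdisj hspan
  choose a b h ha hb habF using exists_gEdge_mem σ hdisj hspan
  have hsub : range (coverEdges v h) ⊆ F := by
    rintro _ ⟨i | q, rfl⟩
    exacts [hvF i, habF q]
  have hF : range (coverEdges v h) = F := eq_of_subset_of_ncard_le hsub
    (by rwa [ncard_range_coverEdges σ h hv ha hb]) (toFinite F)
  refine ⟨v, hv, fun p => ?_⟩
  have hap := endpoint_eq_of_subset_range_coverEdges σ h hv ha hb hF.ge (hspan p)
    (Or.inl rfl)
  have hbp := endpoint_eq_of_subset_range_coverEdges σ h hv ha hb hF.ge (hspan p)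
    (Or.inr rfl)
  rw [ha p] at hap
  rw [hb p] at hbp
  exact hap ▸ hbp ▸ h p

end MulticoloredClique

theorem multicoloredClique_iff_spaceCoverPGM_general
    {V : Type*} [Fintype V]
    (G : SimpleGraph V) (k : ℕ) (hk : 2 ≤ k) (σ : V → Fin k)
    (A : Matrix (MCVert V k) (MCEdge G k) (ZMod 2))
    (hA : A = incMC G k σ + pertMC G k σ)
    (k' : ℕ) (hk' : k' = k * (k + 1) / 2) :
    (∃ K : Finset V, G.IsClique (K : Set V) ∧
        ∀ i : Fin k, (K.filter fun v => σ v = i).card = 1) ↔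
      (∃ F : Set (MCEdge G k),
        Disjoint F (Set.range fun p : {p : Fin k × Fin k // p.1 < p.2} =>
          (Sum.inr (Sum.inr p) : MCEdge G k)) ∧
        F.ncard ≤ k' ∧
        ∀ p : {p : Fin k × Fin k // p.1 < p.2},
          Aᵀ (Sum.inr (Sum.inr p)) ∈
            Submodule.span (ZMod 2) ((fun e : MCEdge G k => Aᵀ e) '' F)) := by
  subst hA hk'
  rw [MulticoloredClique.exists_rainbow_clique_iff_exists_transversal]
  constructor
  · rintro ⟨v, hv, hadj⟩
    exact ⟨Set.range (MulticoloredClique.coverEdges v hadj),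
      MulticoloredClique.disjoint_range_coverEdges hadj,
      (MulticoloredClique.ncard_range_coverEdges σ hadj hv (fun _ => hv _) (fun _ => hv _)).le,
      MulticoloredClique.terminal_mem_span_coverEdges σ hv hadj⟩
  · rintro ⟨F, hdisj, hcard, hspan⟩
    exact MulticoloredClique.exists_transversal_of_mem_span σ hk hdisj hcard hspan

/-- Correctness of the W[1]-hardness reduction from Multicolored Clique:
for a finite simple graph `G`, `k ≥ 2`, and a partition of `V(G)` into independent sets
`X_1, …, X_k` (given by the colouring `σ`), with `A = I(G') + P` and `k' = k(k+1)/2`,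
the graph `G` has a clique meeting every `X_i` in exactly one vertex if and only if there
is a set `F` of non-terminal columns of `A` with `|F| ≤ k'` spanning every terminal
column `A^{u_i u_j}`. -/
theorem multicoloredClique_iff_spaceCoverPGM
    {V : Type*} [Fintype V] [DecidableEq V]
    (G : SimpleGraph V) (k : ℕ) (hk : 2 ≤ k) (σ : V → Fin k)
    (hind : ∀ u v : V, σ u = σ v → ¬ G.Adj u v)
    (A : Matrix (MCVert V k) (MCEdge G k) (ZMod 2))
    (hA : A = incMC G k σ + pertMC G k σ)
    (k' : ℕ) (hk' : k' = k * (k + 1) / 2) :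
    (∃ K : Finset V, G.IsClique (K : Set V) ∧
        ∀ i : Fin k, (K.filter fun v => σ v = i).card = 1) ↔
      (∃ F : Set (MCEdge G k),
        Disjoint F (Set.range fun p : {p : Fin k × Fin k // p.1 < p.2} =>
          (Sum.inr (Sum.inr p) : MCEdge G k)) ∧
        F.ncard ≤ k' ∧
        ∀ p : {p : Fin k × Fin k // p.1 < p.2},
          Aᵀ (Sum.inr (Sum.inr p)) ∈
            Submodule.span (ZMod 2) ((fun e : MCEdge G k => Aᵀ e) '' F)) :=
  multicoloredClique_iff_spaceCoverPGM_general G k hk σ A hA k' hk'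
end
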